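/- The de Finetti state ζ^n_{AR} = ∫ σ_{AR}^{⊗n} d(σ_{AR}), where the integral is over pure states on H_A ⊗ H_R (H_R ≅ H_A, dim H_A = d) with respect to the measure induced by the Haar measure on the unitary group, can be written as a finite convex combination ζ^n_{AR} = Σ_{i=1}^N p_i (ω^i_{AR})^{⊗n} of n-fold tensor powers of pure states ω^i_{AR} on H_A ⊗ H_R, with N ≤ (n+1)^{2d²−2} terms. -/

import Mathlib

open Matrix Kronecker BigOperators
open scoped ComplexOrder

noncomputable section
attribute [local instance] Classical.propDecidable

/-- Square root of a positive semidefinite matrix (junk value `0` otherwise). -/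
def msqrt {n : Type*} [Fintype n] [DecidableEq n] (ρ : Matrix n n ℂ) : Matrix n n ℂ :=
  if h : ρ.PosSemidef then
    (h.1.eigenvectorUnitary : Matrix n n ℂ) *
      Matrix.diagonal ((↑) ∘ (Real.sqrt ·) ∘ h.1.eigenvalues) *
      (star h.1.eigenvectorUnitary : Matrix n n ℂ)
  else 0

/-- The trace norm `‖M‖₁ = tr √(Mᴴ M)` of a (possibly rectangular) complex matrix. -/
def traceNorm {n m : Type*} [Fintype n] [Fintype m] [DecidableEq m] (M : Matrix n m ℂ) : ℝ :=
  (msqrt (Mᴴ * M)).trace.re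

/-- The Hilbert-Schmidt (Frobenius) norm of a complex matrix. -/
def frobNorm {n m : Type*} [Fintype n] [Fintype m] (M : Matrix n m ℂ) : ℝ :=
  Real.sqrt (∑ i, ∑ j, ‖M i j‖ ^ 2)

/-- A density operator: positive semidefinite with unit trace. -/
def IsDensity {n : Type*} [Fintype n] (ρ : Matrix n n ℂ) : Prop :=
  ρ.PosSemidef ∧ ρ.trace = 1

/-- The projector onto the support of a Hermitian matrix (junk value `0` otherwise). -/
def suppProj {n : Type*} [Fintype n] [DecidableEq n] (ρ : Matrix n n ℂ) : Matrix n n ℂ :=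
  if h : ρ.IsHermitian then
    (h.eigenvectorUnitary : Matrix n n ℂ) *
      Matrix.diagonal (fun i => if h.eigenvalues i = 0 then (0 : ℂ) else 1) *
      star (h.eigenvectorUnitary : Matrix n n ℂ)
  else 0

/-- The von Neumann entropy (base 2) of a Hermitian matrix (junk value `0` otherwise). -/
def vnEntropy {n : Type*} [Fintype n] [DecidableEq n] (ρ : Matrix n n ℂ) : ℝ :=
  if h : ρ.IsHermitian then -∑ i, h.eigenvalues i * Real.logb 2 (h.eigenvalues i) else 0

/-- Partial trace over the second tensor factor. -/
def ptr2 {X Y : Type*} [Fintype X] [Fintype Y] (ρ : Matrix (X × Y) (X × Y) ℂ) :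
    Matrix X X ℂ :=
  Matrix.of fun x x' => ∑ y, ρ (x, y) (x', y)

/-- Partial trace over the first tensor factor. -/
def ptr1 {X Y : Type*} [Fintype X] [Fintype Y] (ρ : Matrix (X × Y) (X × Y) ℂ) :
    Matrix Y Y ℂ :=
  Matrix.of fun y y' => ∑ x, ρ (x, y) (x, y')

/-- The rank-one projector `|ψ⟩⟨ψ|` associated to a vector `ψ`. -/
def pureMat {n : Type*} (ψ : n → ℂ) : Matrix n n ℂ :=
  Matrix.vecMulVec ψ (star ψ)

/-- `ψ` is a unit vector. -/
def IsUnit' {n : Type*} [Fintype n] (ψ : n → ℂ) : Prop := ∑ z, ‖ψ z‖ ^ 2 = 1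

/-- The binary entropy function with logarithms in base 2. -/
def binEnt (x : ℝ) : ℝ := -(x * Real.logb 2 x) - (1 - x) * Real.logb 2 (1 - x)

/-- The entanglement of formation of a bipartite state, as the infimum over pure-state
decompositions of the average entropy of entanglement. -/
def EoF {A B : Type*} [Fintype A] [Fintype B] [DecidableEq A]
    (ρ : Matrix (A × B) (A × B) ℂ) : ℝ :=
  sInf { x | ∃ (m : ℕ) (p : Fin m → ℝ) (ψ : Fin m → (A × B) → ℂ),
    (∀ i, 0 < p i) ∧ (∀ i, IsUnit' (ψ i)) ∧
    ρ = ∑ i, (p i : ℂ) • pureMat (ψ i) ∧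
    x = ∑ i, p i * vnEntropy (ptr2 (pureMat (ψ i))) }

/-- The alternative conditional max-entropy
`H₀(A|B)_ρ = sup_σ log tr[ρ⁰ (1 ⊗ σ)]`, supremum over density operators `σ` on `B`. -/
def H0cond {A B : Type*} [Fintype A] [Fintype B] [DecidableEq A] [DecidableEq B]
    (ρ : Matrix (A × B) (A × B) ℂ) : ℝ :=
  sSup { x | ∃ σ : Matrix B B ℂ, IsDensity σ ∧
    x = Real.logb 2 ((suppProj ρ * ((1 : Matrix A A ℂ) ⊗ₖ σ)).trace.re) }

/-- Separability of a bipartite state. -/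
def IsSep {A B : Type*} [Fintype A] [Fintype B] (ρ : Matrix (A × B) (A × B) ℂ) : Prop :=
  ∃ (N : ℕ) (q : Fin N → ℝ) (α : Fin N → Matrix A A ℂ) (β : Fin N → Matrix B B ℂ),
    (∀ i, 0 ≤ q i) ∧ (∀ i, IsDensity (α i)) ∧ (∀ i, IsDensity (β i)) ∧
    ρ = ∑ i, (q i : ℂ) • (α i ⊗ₖ β i)

/-- `n`-fold tensor power of a matrix. -/
def tensorPow {X : Type*} (ρ : Matrix X X ℂ) (n : ℕ) :
    Matrix (Fin n → X) (Fin n → X) ℂ :=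
  Matrix.of fun f g => ∏ i, ρ (f i) (g i)


/-!
Every `ψ^{⊗n}(ψ^{⊗n})†` with `ψ` a unit vector is a Hermitian, trace-one operator that is
invariant under permuting the tensor factors on either side. Such operators form a real space of
dimension at most `S²`, where `S ≤ (n + 1)^(d² - 1)` counts the sorted tuples
`Fin n → Fin d²` (a basis of the symmetric subspace). Being an average over a compact set of
these operators, `ζ` lies in their convex hull, and Carathéodory's theorem inside the trace-one
hyperplane of that space writes it with at most `S²` of them.
-/

section ConvexHull

variable {E : Type*} [NormedAddCommGroup E] [NormedSpace ℝ E] [FiniteDimensional ℝ E]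

theorem IsCompact.isCompact_convexHull {s : Set E} (hs : IsCompact s) :
    IsCompact (convexHull ℝ s) := by
  let combo (k : ℕ) : (Fin k → ℝ) × (Fin k → E) → E := fun wz => ∑ i, wz.1 i • wz.2 i
  have hcombo (k : ℕ) : Continuous (combo k) := by fun_prop
  suffices convexHull ℝ s = ⋃ k ∈ Finset.range (Module.finrank ℝ E + 2),
      combo k '' (stdSimplex ℝ (Fin k) ×ˢ Set.univ.pi fun _ => s) by
    rw [this]
    exact (Finset.range _).isCompact_biUnion fun k _ =>
      ((isCompact_stdSimplex ℝ (Fin k)).prod (isCompact_univ_pi fun _ => hs)).image (hcombo k)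
  apply subset_antisymm
  · intro x hx
    obtain ⟨ι, _, z, w, hzs, hz, hw0, hw1, rfl⟩ := eq_pos_convex_span_of_mem_convexHull hx
    have hcard : Fintype.card ι < Module.finrank ℝ E + 2 :=
      Nat.lt_succ_of_le (hz.card_le_finrank_succ.trans (Nat.succ_le_succ (Submodule.finrank_le _)))
    let e := Fintype.equivFin ι
    refine Set.mem_biUnion (Finset.mem_range.2 hcard) ⟨(w ∘ e.symm, z ∘ e.symm), ?_, ?_⟩
    · refine ⟨⟨fun i => (hw0 _).le, ?_⟩, fun i _ => hzs ⟨_, rfl⟩⟩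
      simpa [e.symm.sum_comp w] using hw1
    · exact e.symm.sum_comp fun i => w i • z i
  · simp only [Set.iUnion_subset_iff, Set.image_subset_iff]
    rintro k - ⟨w, z⟩ ⟨hw, hz⟩
    exact (convex_convexHull ℝ s).sum_mem (fun i _ => hw.1 i) hw.2
      fun i _ => subset_convexHull ℝ s (hz i trivial)

open MeasureTheory in
theorem IsCompact.integral_mem_convexHull {α : Type*} [MeasurableSpace α] {μ : Measure α}
    [IsProbabilityMeasure μ] {K : Set E} (hK : IsCompact K) {f : α → E}
    (hf : Integrable f μ) (hfK : ∀ᵐ x ∂μ, f x ∈ K) : ∫ x, f x ∂μ ∈ convexHull ℝ K :=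
  (convex_convexHull ℝ K).integral_mem hK.isCompact_convexHull.isClosed
    (hfK.mono fun _ hx => subset_convexHull ℝ K hx) hf

end ConvexHull

theorem exists_convexCombination_card_le_finrank_span {𝕜 E : Type*} [Field 𝕜] [LinearOrder 𝕜]
    [IsStrictOrderedRing 𝕜] [AddCommGroup E] [Module 𝕜 E] [FiniteDimensional 𝕜 E]
    {s : Set E} {x : E} (hx : x ∈ convexHull 𝕜 s) (φ : E →ₗ[𝕜] 𝕜) (hφ : ∀ y ∈ s, φ y = 1) :
    ∃ (N : ℕ) (p : Fin N → 𝕜) (y : Fin N → E), N ≤ Module.finrank 𝕜 (Submodule.span 𝕜 s) ∧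
      (∀ i, 0 ≤ p i) ∧ ∑ i, p i = 1 ∧ (∀ i, y i ∈ s) ∧ ∑ i, p i • y i = x := by
  obtain ⟨ι, _, z, w, hzs, hz, hw0, hw1, rfl⟩ := eq_pos_convex_span_of_mem_convexHull hx
  obtain ⟨i₀, -, -⟩ := Finset.exists_ne_zero_of_sum_ne_zero (hw1.trans_ne one_ne_zero)
  have hzspan (i : ι) : z i ∈ Submodule.span 𝕜 s := Submodule.subset_span (hzs ⟨i, rfl⟩)
  -- the differences of the `z i` lie in the hyperplane `φ = 0`, which misses `z i₀`
  have hlt : vectorSpan 𝕜 (Set.range z) < Submodule.span 𝕜 s := by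
    refine lt_of_le_of_lt (b := Submodule.span 𝕜 s ⊓ LinearMap.ker φ) ?_ ?_
    · rw [vectorSpan_def, Submodule.span_le]
      rintro _ ⟨_, ⟨i, rfl⟩, _, ⟨j, rfl⟩, rfl⟩
      refine ⟨Submodule.sub_mem _ (hzspan i) (hzspan j), ?_⟩
      simp [hφ _ (hzs ⟨i, rfl⟩), hφ _ (hzs ⟨j, rfl⟩)]
    · refine inf_lt_left.2 fun h => ?_
      simpa [hφ _ (hzs ⟨i₀, rfl⟩)] using h (hzspan i₀)
  let e := Fintype.equivFin ι
  refine ⟨Fintype.card ι, w ∘ e.symm, z ∘ e.symm, ?_, fun i => (hw0 _).le, ?_,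
    fun i => hzs ⟨_, rfl⟩, e.symm.sum_comp fun i => w i • z i⟩
  · have : Nonempty ι := ⟨i₀⟩
    rw [← hz.finrank_vectorSpan_add_one]
    exact Submodule.finrank_lt_finrank_of_lt hlt
  · simpa [e.symm.sum_comp w] using hw1

open Finset in
theorem card_monotone_fin_le (n m : ℕ) :
    Nat.card {f : Fin n → Fin m // Monotone f} ≤ (n + 1) ^ (m - 1) := by
  cases m with
  | zero =>
    calc Nat.card {f : Fin n → Fin 0 // Monotone f}
        ≤ Nat.card (Fin n → Fin 0) := Finite.card_subtype_le _
      _ ≤ (n + 1) ^ (0 - 1) := by simp [zero_pow_le_one]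
  | succ k =>
    -- a monotone `f` is determined by the counts `#{i | f i ≤ j}`, and the count at the last
    -- value `j` is always `n`
    let count (f : {f : Fin n → Fin (k + 1) // Monotone f}) (j : Fin k) : Fin (n + 1) :=
      ⟨#{i | f.1 i ≤ j.castSucc},
        Nat.lt_succ_of_le ((card_le_univ _).trans_eq (Fintype.card_fin n))⟩
    have hcount : Function.Injective count := by
      intro f g hfg
      ext i : 2
      refine eq_of_forall_ge_iff fun a => ?_
      obtain ⟨j, rfl⟩ | rfl := a.eq_castSucc_or_eq_last
      · have := congrArg Fin.val (congrFun hfg j)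
        rw [← Tuple.lt_card_le_iff_apply_le_of_monotone f.2,
          ← Tuple.lt_card_le_iff_apply_le_of_monotone g.2]
        exact iff_of_eq (congrArg _ this)
      · simp [Fin.le_last]
    simpa using Nat.card_le_card_of_injective count hcount

namespace Matrix

-- in coordinates, the operators supported on the symmetric subspace of the `n`-th tensor power
def permInvariant (R : Type*) {X α : Type*} [Semiring R] [AddCommMonoid α] [Module R α]
    (n : ℕ) : Submodule R (Matrix (Fin n → X) (Fin n → X) α) where
  carrier := {M | ∀ (σ τ : Equiv.Perm (Fin n)) f g, M (f ∘ σ) (g ∘ τ) = M f g}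
  add_mem' ha hb σ τ f g := by simp [ha σ τ f g, hb σ τ f g]
  zero_mem' _ _ _ _ := rfl
  smul_mem' c M hM σ τ f g := by simp [hM σ τ f g]

theorem finrank_selfAdjoint_inf_permInvariant_le {X : Type*} [Fintype X] [LinearOrder X]
    (n : ℕ) :
    Module.finrank ℝ ↥(selfAdjoint.submodule ℝ (Matrix (Fin n → X) (Fin n → X) ℂ) ⊓
      permInvariant ℝ n) ≤ Nat.card {f : Fin n → X // Monotone f} ^ 2 := by
  let restrict : Matrix (Fin n → X) (Fin n → X) ℂ →ₗ[ℝ]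
      ({f : Fin n → X // Monotone f} × {f : Fin n → X // Monotone f} → ℝ) :=
    { toFun M p := (M p.1 p.2).re + (M p.1 p.2).im
      map_add' M M' := by
        ext
        simp only [add_apply, Complex.add_re, Complex.add_im, Pi.add_apply]
        ring
      map_smul' c M := by ext; simp [mul_add] }
  have hinj : Function.Injective
      (restrict ∘ₗ (selfAdjoint.submodule ℝ _ ⊓ permInvariant ℝ n).subtype) := by
    rw [← LinearMap.ker_eq_bot, LinearMap.ker_eq_bot']
    rintro ⟨M, hherm, hperm⟩ hM
    -- `re + im` at `(f, g)` and `(g, f)` gives `re ± im` of the Hermitian entry `M f g`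
    have hmono (f g : {f : Fin n → X // Monotone f}) : M f g = 0 := by
      have h₁ : (M f g).re + (M f g).im = 0 := congrFun hM (f, g)
      have h₂ : (M g f).re + (M g f).im = 0 := congrFun hM (g, f)
      rw [← congrFun₂ hherm g f] at h₂
      simp only [star_apply, RCLike.star_def, Complex.conj_re, Complex.conj_im] at h₂
      apply Complex.ext <;> simp only [Complex.zero_re, Complex.zero_im] <;> linarith
    refine Subtype.ext (funext₂ fun f g => ?_)
    show M f g = 0
    rw [← hperm (Tuple.sort f) (Tuple.sort g) f g]
    exact hmono ⟨_, Tuple.monotone_sort f⟩ ⟨_, Tuple.monotone_sort g⟩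
  calc Module.finrank ℝ _ ≤ Module.finrank ℝ _ := LinearMap.finrank_le_finrank_of_injective hinj
    _ = _ := by simp [sq, Nat.card_eq_fintype_card]

end Matrix

def tensorPowVec {X : Type*} (ψ : X → ℂ) (n : ℕ) : (Fin n → X) → ℂ :=
  fun f => ∏ i, ψ (f i)

theorem tensorPow_pureMat {X : Type*} (ψ : X → ℂ) (n : ℕ) :
    tensorPow (pureMat ψ) n = pureMat (tensorPowVec ψ n) := by
  ext f g
  simp [tensorPow, pureMat, tensorPowVec, vecMulVec, Finset.prod_mul_distrib]

theorem IsUnit'.tensorPowVec {X : Type*} [Fintype X] {ψ : X → ℂ} (hψ : IsUnit' ψ) (n : ℕ) :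
    IsUnit' (tensorPowVec ψ n) := by
  unfold IsUnit' at hψ ⊢
  simp only [_root_.tensorPowVec, norm_prod, ← Finset.prod_pow]
  rw [← Fintype.prod_sum fun _ z => ‖ψ z‖ ^ 2]
  simp [hψ]

theorem IsUnit'.trace_pureMat {X : Type*} [Fintype X] {φ : X → ℂ} (hφ : IsUnit' φ) :
    (pureMat φ).trace = 1 := by
  simp only [pureMat, trace, diag_apply, vecMulVec_apply, Pi.star_apply]
  rw [← Complex.ofReal_one, ← hφ]
  simp [Complex.mul_conj']

theorem pureMat_mem_selfAdjoint {X : Type*} (φ : X → ℂ) :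
    pureMat φ ∈ selfAdjoint (Matrix X X ℂ) := by
  ext i j
  simp [pureMat, vecMulVec_apply, mul_comm]

theorem pureMat_tensorPowVec_mem_permInvariant {X : Type*} (ψ : X → ℂ) (n : ℕ) :
    pureMat (tensorPowVec ψ n) ∈ Matrix.permInvariant ℝ n := by
  intro σ τ f g
  simp only [pureMat, vecMulVec_apply, Pi.star_apply, tensorPowVec, Function.comp_apply,
    Equiv.prod_comp σ fun i => ψ (f i), Equiv.prod_comp τ fun i => ψ (g i)]

theorem isCompact_setOf_isUnit' {X : Type*} [Fintype X] :
    IsCompact {ψ : X → ℂ | IsUnit' ψ} := by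
  refine Metric.isCompact_of_isClosed_isBounded ?_ ?_
  · exact isClosed_eq (by fun_prop) continuous_const
  · refine (Metric.isBounded_closedBall (x := 0) (r := 1)).subset fun ψ hψ => ?_
    rw [mem_closedBall_zero_iff, pi_norm_le_iff_of_nonneg zero_le_one]
    intro z
    have : ‖ψ z‖ ^ 2 ≤ 1 := hψ ▸ Finset.single_le_sum (f := fun i => ‖ψ i‖ ^ 2)
      (fun i _ => by positivity) (Finset.mem_univ z)
    exact (pow_le_one_iff_of_nonneg (norm_nonneg _) two_ne_zero).1 this

theorem finrank_span_range_tensorPow_pureMat_le (m n : ℕ) :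
    Module.finrank ℝ (Submodule.span ℝ (Set.range fun ψ : Fin m → ℂ => tensorPow (pureMat ψ) n))
      ≤ (n + 1) ^ ((m - 1) * 2) := by
  have hspan : Submodule.span ℝ (Set.range fun ψ : Fin m → ℂ => tensorPow (pureMat ψ) n) ≤
      selfAdjoint.submodule ℝ _ ⊓ Matrix.permInvariant ℝ n := by
    rw [Submodule.span_le]
    rintro _ ⟨ψ, rfl⟩
    simp only [SetLike.mem_coe, tensorPow_pureMat]
    exact ⟨pureMat_mem_selfAdjoint _, pureMat_tensorPowVec_mem_permInvariant ψ n⟩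
  calc _ ≤ _ := Submodule.finrank_mono hspan
    _ ≤ Nat.card {f : Fin n → Fin m // Monotone f} ^ 2 :=
      Matrix.finrank_selfAdjoint_inf_permInvariant_le n
    _ ≤ ((n + 1) ^ (m - 1)) ^ 2 := Nat.pow_le_pow_left (card_monotone_fin_le n m) 2
    _ = (n + 1) ^ ((m - 1) * 2) := (pow_mul _ _ _).symm

open MeasureTheory in
theorem mem_convexHull_tensorPow_pureMat {X : Type*} [Fintype X] (n : ℕ)
    {μ : Measure (X → ℂ)} [IsProbabilityMeasure μ] (hsupp : ∀ᵐ ψ ∂μ, IsUnit' ψ)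
    {ζ : Matrix (Fin n → X) (Fin n → X) ℂ}
    (hζ : ∀ f g, ζ f g = ∫ ψ, tensorPow (pureMat ψ) n f g ∂μ) :
    ζ ∈ convexHull ℝ ((fun ψ => tensorPow (pureMat ψ) n) '' {ψ | IsUnit' ψ}) := by
  -- integrate in the normed space `(Fin n → X) → (Fin n → X) → ℂ`: `Matrix` has no global norm
  let F (ψ : X → ℂ) : (Fin n → X) → (Fin n → X) → ℂ := of.symm (tensorPow (pureMat ψ) n)
  have hF : Continuous F := by
    simp only [F, tensorPow, pureMat, vecMulVec_apply, Pi.star_apply, Equiv.symm_apply_apply]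
    fun_prop
  have hK := isCompact_setOf_isUnit'.image hF
  have hFK : ∀ᵐ ψ ∂μ, F ψ ∈ F '' {ψ | IsUnit' ψ} := hsupp.mono fun ψ hψ => ⟨ψ, hψ, rfl⟩
  obtain ⟨C, hC⟩ := hK.isBounded.exists_norm_le
  have hFint : Integrable F μ := .of_bound hF.aestronglyMeasurable C (hFK.mono fun ψ => hC _)
  let L := (ofLinearEquiv ℝ (m := Fin n → X) (n := Fin n → X) (α := ℂ)).toLinearMap
  have hζF : ζ = L (∫ ψ, F ψ ∂μ) := by
    ext f g
    rw [hζ]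
    change ∫ ψ, F ψ f g ∂μ = (∫ ψ, F ψ ∂μ) f g
    rw [eval_integral hFint.eval, eval_integral (hFint.eval f).eval]
  have hT : (fun ψ => tensorPow (pureMat ψ) n) '' {ψ | IsUnit' ψ} =
      L '' (F '' {ψ | IsUnit' ψ}) := by
    rw [Set.image_image]
    rfl
  rw [hζF, hT, ← L.image_convexHull]
  exact Set.mem_image_of_mem _ (hK.integral_mem_convexHull hFint hFK)

open MeasureTheory in
theorem deFinetti_finite_decomposition_general (d : ℕ) (n : ℕ)
    (μ : Measure (Fin (d * d) → ℂ)) [IsProbabilityMeasure μ]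
    (hsupp : ∀ᵐ ψ ∂μ, IsUnit' ψ)
    (ζ : Matrix (Fin n → Fin (d * d)) (Fin n → Fin (d * d)) ℂ)
    (hζ : ∀ fg : (Fin n → Fin (d * d)) × (Fin n → Fin (d * d)),
      ζ fg.1 fg.2 = ∫ ψ, tensorPow (pureMat ψ) n fg.1 fg.2 ∂μ) :
    ∃ (N : ℕ) (p : Fin N → ℝ) (ω : Fin N → (Fin (d * d) → ℂ)),
      (N : ℝ) ≤ ((n : ℝ) + 1) ^ (2 * d ^ 2 - 2) ∧
      (∀ i, 0 ≤ p i) ∧ (∑ i, p i = 1) ∧ (∀ i, IsUnit' (ω i)) ∧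
      ζ = ∑ i, (p i : ℂ) • tensorPow (pureMat (ω i)) n := by
  set T := (fun ψ => tensorPow (pureMat ψ) n) '' {ψ : Fin (d * d) → ℂ | IsUnit' ψ}
  have hζT : ζ ∈ convexHull ℝ T := mem_convexHull_tensorPow_pureMat n hsupp fun f g => hζ (f, g)
  have htrace : ∀ M ∈ T, (Complex.reLm ∘ₗ traceLinearMap _ ℝ ℂ) M = 1 := by
    rintro _ ⟨ψ, hψ, rfl⟩
    simp [tensorPow_pureMat, (hψ.tensorPowVec n).trace_pureMat]
  obtain ⟨N, p, y, hN, hp0, hp1, hyT, rfl⟩ :=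
    exists_convexCombination_card_le_finrank_span hζT _ htrace
  choose ω hω hωy using hyT
  refine ⟨N, p, ω, ?_, hp0, hp1, hω, ?_⟩
  · have hspan := Submodule.span_mono (R := ℝ) (Set.image_subset_range _ _ : T ⊆ _)
    have hexp : 2 * d ^ 2 - 2 = (d * d - 1) * 2 := by rw [sq]; omega
    rw [hexp]
    exact_mod_cast hN.trans ((Submodule.finrank_mono hspan).trans
      (finrank_span_range_tensorPow_pureMat_le (d * d) n))
  · simp only [← hωy, Complex.coe_smul]

open MeasureTheory in
/-- The de Finetti state `ζⁿ = ∫ ψ^{⊗n} dψ`, the average of `n`-fold tensor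
powers of pure states on `H_A ⊗ H_R ≅ ℂ^{d²}` with respect to the unitarily invariant measure,
is a convex combination of at most `(n+1)^{2d²−2}` tensor powers of pure states. -/
theorem deFinetti_finite_decomposition (d : ℕ) (hd : 0 < d) (n : ℕ)
    (μ : Measure (Fin (d * d) → ℂ)) [IsProbabilityMeasure μ]
    (hsupp : ∀ᵐ ψ ∂μ, IsUnit' ψ)
    (hinv : ∀ U : Matrix (Fin (d * d)) (Fin (d * d)) ℂ,
      U ∈ Matrix.unitaryGroup (Fin (d * d)) ℂ →
        Measure.map (fun ψ => U *ᵥ ψ) μ = μ)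
    (ζ : Matrix (Fin n → Fin (d * d)) (Fin n → Fin (d * d)) ℂ)
    (hζ : ∀ fg : (Fin n → Fin (d * d)) × (Fin n → Fin (d * d)),
      ζ fg.1 fg.2 = ∫ ψ, tensorPow (pureMat ψ) n fg.1 fg.2 ∂μ) :
    ∃ (N : ℕ) (p : Fin N → ℝ) (ω : Fin N → (Fin (d * d) → ℂ)),
      (N : ℝ) ≤ ((n : ℝ) + 1) ^ (2 * d ^ 2 - 2) ∧
      (∀ i, 0 ≤ p i) ∧ (∑ i, p i = 1) ∧ (∀ i, IsUnit' (ω i)) ∧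
      ζ = ∑ i, (p i : ℂ) • tensorPow (pureMat (ω i)) n :=
  deFinetti_finite_decomposition_general d n μ hsupp ζ hζ
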